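/- For every positive equivalence relation η such that the η-equivalence class [x] is infinite for every x ∈ ℕ, the ascending family 𝒜_η is conservatively explanatorily learnable. -/

import Mathlib

namespace PEL

/-- Evaluation of the `e`-th partial recursive function (via the standard
numbering of `Nat.Partrec.Code`). -/
def evalCode (e : ℕ) (x : ℕ) : Part ℕ :=
  (Denumerable.ofNat Nat.Partrec.Code e).eval x

/-- The `e`-th recursively enumerable set `W_e = dom φ_e`. -/
def W (e : ℕ) : Set ℕ := {x | (evalCode e x).Dom}

/-- A set is r.e. iff it equals some `W_e`. -/
def RESet (S : Set ℕ) : Prop := ∃ e, W e = S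

/-- A positive equivalence relation: an r.e. equivalence relation on ℕ
with infinitely many equivalence classes. -/
structure PosEq where
  rel : ℕ → ℕ → Prop
  equiv : Equivalence rel
  re : ∃ e, ∀ x y, rel x y ↔ Nat.pair x y ∈ W e
  classes_infinite : (Set.range fun x => {y | rel x y}).Infinite

/-- The η-equivalence class of `x`. -/
def classOf (η : PosEq) (x : ℕ) : Set ℕ := {y | η.rel x y}

/-- A set is η-closed iff it is a union of η-equivalence classes. -/
def EtaClosed (η : PosEq) (S : Set ℕ) : Prop := ∀ x ∈ S, classOf η x ⊆ S

/-- A set is η-finite iff it is a union of finitely many η-equivalence classes. -/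
def EtaFinite (η : PosEq) (S : Set ℕ) : Prop :=
  EtaClosed η S ∧ (classOf η '' S).Finite

/-- A set is η-infinite iff it is a union of infinitely many η-equivalence classes. -/
def EtaInfinite (η : PosEq) (S : Set ℕ) : Prop :=
  EtaClosed η S ∧ (classOf η '' S).Infinite

/-- `f` is a one-one uniformly r.e. numbering of the class `C`:
`f` is computable, `i ↦ W_{f i}` is injective, and `C = {W_{f i} : i ∈ ℕ}`. -/
def OneOneNumbering (f : ℕ → ℕ) (C : Set (Set ℕ)) : Prop :=
  Computable f ∧ (∀ i j, W (f i) = W (f j) → i = j) ∧ C = Set.range fun i => W (f i)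

/-- An η-family: an (automatically infinite) class of η-closed r.e. sets
admitting a one-one uniformly r.e. numbering. -/
def EtaFamily (η : PosEq) (C : Set (Set ℕ)) : Prop :=
  (∀ L ∈ C, EtaClosed η L) ∧ ∃ f, OneOneNumbering f C

/-- `a η n` is the `n`-th (in ascending order) least representative of an
η-equivalence class. -/
noncomputable def a (η : PosEq) (n : ℕ) : ℕ := Nat.nth (fun x => ∀ y, η.rel x y → x ≤ y) n

/-- `A η n = [a_0] ∪ … ∪ [a_{n-1}]`. -/
def A (η : PosEq) (n : ℕ) : Set ℕ := {x | ∃ m < n, η.rel (a η m) x}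

/-- The ascending family `𝒜_η = {A_n : n ∈ ℕ}`. -/
def ascendingFamily (η : PosEq) : Set (Set ℕ) := Set.range (A η)

/-- A learner: a map from finite sequences over ℕ ∪ {#} (with `none` as the
pause symbol `#`) to hypotheses in ℕ ∪ {?} (with `none` as `?`). -/
abbrev Learner := List (Option ℕ) → Option ℕ

/-- The content of a text. -/
def cntT (T : ℕ → Option ℕ) : Set ℕ := {x | ∃ n, T n = some x}

/-- `T` is a text for `L`. -/
def IsText (T : ℕ → Option ℕ) (L : Set ℕ) : Prop := cntT T = L

/-- The initial segment `T[n] = T(0), …, T(n-1)`. -/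
def seg (T : ℕ → Option ℕ) (n : ℕ) : List (Option ℕ) := (List.range n).map T

/-- The content of a finite sequence. -/
def cntL (σ : List (Option ℕ)) : Set ℕ := {x | some x ∈ σ}

/-- Explanatory learning with hypotheses interpreted in hypothesis space `H`. -/
def ExLearnsIn (H : ℕ → Set ℕ) (M : Learner) (C : Set (Set ℕ)) : Prop :=
  ∀ L ∈ C, ∀ T, IsText T L →
    ∃ n e, M (seg T n) = some e ∧ H e = L ∧ ∀ j, n ≤ j → M (seg T j) = M (seg T n)

/-- Behaviourally correct learning with hypothesis space `H`. -/
def BCLearnsIn (H : ℕ → Set ℕ) (M : Learner) (C : Set (Set ℕ)) : Prop :=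
  ∀ L ∈ C, ∀ T, IsText T L →
    ∃ n, ∀ j, n ≤ j → ∃ e, M (seg T j) = some e ∧ H e = L

/-- Finite (one-shot) learning with hypothesis space `H`. -/
def FinLearnsIn (H : ℕ → Set ℕ) (M : Learner) (C : Set (Set ℕ)) : Prop :=
  ∀ L ∈ C, ∀ T, IsText T L →
    ∃ n e, M (seg T n) = some e ∧ H e = L ∧ (∀ m, m < n → M (seg T m) = none) ∧
      ∀ j, n ≤ j → M (seg T j) = M (seg T n)

/-- The sequence of hypotheses of `M` on text `T` converges. -/
def ConvergesOn (M : Learner) (T : ℕ → Option ℕ) : Prop :=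
  ∃ n, ∀ j, n ≤ j → M (seg T j) = M (seg T n)

/-- Confident learning with hypothesis space `H`: explanatory learning with
convergence on every text for every subset of ℕ. -/
def ConfLearnsIn (H : ℕ → Set ℕ) (M : Learner) (C : Set (Set ℕ)) : Prop :=
  ExLearnsIn H M C ∧ ∀ T, ConvergesOn M T

/-- Vacillatory learning with hypothesis space `H`. -/
def VacLearnsIn (H : ℕ → Set ℕ) (M : Learner) (C : Set (Set ℕ)) : Prop :=
  BCLearnsIn H M C ∧
    ∀ L ∈ C, ∀ T, IsText T L → {h : Option ℕ | ∃ n, 1 ≤ n ∧ M (seg T n) = h}.Finite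

/-- Weakly confident learning with hypothesis space `H`: explanatory learning
with convergence on every text consistent with the class. -/
def WConfLearnsIn (H : ℕ → Set ℕ) (M : Learner) (C : Set (Set ℕ)) : Prop :=
  ExLearnsIn H M C ∧ ∀ T, (∃ L ∈ C, cntT T ⊆ L) → ConvergesOn M T

def ExLearnable (C : Set (Set ℕ)) : Prop :=
  ∃ M : Learner, Computable M ∧ ExLearnsIn W M C

def BCLearnable (C : Set (Set ℕ)) : Prop :=
  ∃ M : Learner, Computable M ∧ BCLearnsIn W M C

def FinLearnable (C : Set (Set ℕ)) : Prop :=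
  ∃ M : Learner, Computable M ∧ FinLearnsIn W M C

def ConfLearnable (C : Set (Set ℕ)) : Prop :=
  ∃ M : Learner, Computable M ∧ ConfLearnsIn W M C

def VacLearnable (C : Set (Set ℕ)) : Prop :=
  ∃ M : Learner, Computable M ∧ VacLearnsIn W M C

def WConfLearnable (C : Set (Set ℕ)) : Prop :=
  ∃ M : Learner, Computable M ∧ WConfLearnsIn W M C


/-- `M` is conservative (with hypothesis space `W`): on any text, whenever `M`
abandons a proper hypothesis, that hypothesis fails to contain the content of
the data seen so far. -/
def Conservative (M : Learner) : Prop :=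
  ∀ T : ℕ → Option ℕ, ∀ n k, 1 ≤ k → ∀ e, M (seg T n) = some e →
    M (seg T (n + k)) ≠ M (seg T n) → ¬ cntL (seg T (n + k)) ⊆ W e

/-!
After seeing `σ`, the learner conjectures `[0] ∪ … ∪ [c - 1]` minus `{c}`, where `c` is the least
number not occurring in `σ`. On a text for `A_m` every number below `a_m` eventually appears and
`a_m` never does, so `c` converges to `a_m`, where the conjecture is exactly `A_m`. Since `c` only
moves once `c` itself has appeared, and no conjecture for `c` contains `c`, every mind change is
forced by data outside the abandoned hypothesis.
-/

open Nat.Partrec (Code)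
open Nat.Partrec.Code

theorem mem_W_iff_exists_evaln {e x : ℕ} :
    x ∈ W e ↔ ∃ s, (evaln s (Denumerable.ofNat Code e) x).isSome := by
  simp only [W, evalCode, Set.mem_ofPred_eq, Part.dom_iff_mem, evaln_complete,
    Option.isSome_iff_exists, Option.mem_def]
  exact ⟨fun ⟨v, s, h⟩ => ⟨s, v, h⟩, fun ⟨s, v, h⟩ => ⟨v, s, h⟩⟩

/-- The s-m-n theorem for `Σ₁` relations. -/
theorem exists_computable_W_eq_setOf_exists {P : ℕ × ℕ × ℕ → Prop} (hP : ComputablePred P) :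
    ∃ g : ℕ → ℕ, Computable g ∧ ∀ c, W (g c) = {x | ∃ n, P (c, x, n)} := by
  obtain ⟨_, hP⟩ := hP
  have hsearch : Partrec fun p : ℕ =>
      Nat.rfind fun n => Part.some (decide (P (p.unpair.1, p.unpair.2, n))) :=
    Partrec.rfind (hP.comp ((Computable.fst.comp (Computable.unpair.comp Computable.fst)).pair
      ((Computable.snd.comp (Computable.unpair.comp Computable.fst)).pair
        Computable.snd))).partrec
  obtain ⟨code, hcode⟩ := exists_code.mp (Partrec.nat_iff.mp hsearch)
  refine ⟨fun c => Encodable.encode (curry code c),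
    (Primrec.encode.comp (primrec₂_curry.comp (Primrec.const code) Primrec.id)).to_comp,
    fun c => Set.ext fun x => ?_⟩
  change (eval (Denumerable.ofNat Code (Encodable.encode (curry code c))) x).Dom ↔ _
  simp only [Denumerable.ofNat_encode, eval_curry, hcode, Nat.unpair_pair, Set.mem_ofPred_eq]
  constructor
  · intro h
    exact ⟨_, by simpa using Nat.rfind_spec (Part.get_mem h)⟩
  · rintro ⟨n, hn⟩
    obtain ⟨m, hm, -⟩ := Nat.rfind_min' (p := fun n => decide (P (c, x, n))) (by simpa using hn)
    exact Part.dom_iff_mem.mpr ⟨m, hm⟩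

def hypothesis (η : PosEq) (c : ℕ) : Set ℕ := {x | x ≠ c ∧ ∃ y < c, η.rel x y}

theorem exists_computable_W_eq_hypothesis (η : PosEq) :
    ∃ g : ℕ → ℕ, Computable g ∧ ∀ c, W (g c) = hypothesis η c := by
  obtain ⟨e, he⟩ := η.re
  let code := Denumerable.ofNat Code e
  -- `n` codes a witness `y < c` together with a number of steps of the enumeration of `η`
  let P : ℕ × ℕ × ℕ → Prop := fun q =>
    q.2.1 ≠ q.1 ∧ q.2.2.unpair.1 < q.1 ∧
      (evaln q.2.2.unpair.2 code (Nat.pair q.2.1 q.2.2.unpair.1)).isSome = true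
  have hP : PrimrecPred P := by
    have hn : Primrec fun q : ℕ × ℕ × ℕ => q.2.2.unpair :=
      Primrec.unpair.comp (Primrec.snd.comp Primrec.snd)
    refine .and (.not (Primrec.eq.comp (Primrec.fst.comp Primrec.snd) Primrec.fst))
      (.and (Primrec.nat_lt.comp (Primrec.fst.comp hn) Primrec.fst)
        (Primrec.eq.comp (Primrec.option_isSome.comp (primrec_evaln.comp
          (((Primrec.snd.comp hn).pair (Primrec.const code)).pair
            (Primrec₂.natPair.comp (Primrec.fst.comp Primrec.snd) (Primrec.fst.comp hn)))))
          (Primrec.const true)))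
  obtain ⟨g, hg, hW⟩ := exists_computable_W_eq_setOf_exists hP.computablePred
  refine ⟨g, hg, fun c => (hW c).trans (Set.ext fun x => ?_)⟩
  simp only [hypothesis, P, he, mem_W_iff_exists_evaln, Set.mem_ofPred_eq]
  constructor
  · rintro ⟨n, hxc, hy, hs⟩
    exact ⟨hxc, _, hy, _, hs⟩
  · rintro ⟨hxc, y, hy, s, hs⟩
    exact ⟨Nat.pair y s, by simpa using ⟨hxc, hy, hs⟩⟩

theorem exists_le_length_some_not_mem (σ : List (Option ℕ)) :
    ∃ x ≤ σ.length, some x ∉ σ := by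
  by_contra! h
  have hsub : (List.range (σ.length + 1)).map some ⊆ σ := by
    simpa [List.subset_def, Nat.lt_succ_iff] using h
  have := (List.nodup_range.map (Option.some_injective ℕ)).length_le_of_subset hsub
  simp at this

def leastUnseen (σ : List (Option ℕ)) : ℕ :=
  Nat.find (p := fun x => some x ∉ σ) ((exists_le_length_some_not_mem σ).imp fun _ => And.right)

theorem leastUnseen_not_mem (σ : List (Option ℕ)) : leastUnseen σ ∉ cntL σ :=
  Nat.find_spec (p := fun x => some x ∉ σ) _

theorem mem_cntL_of_lt_leastUnseen {σ : List (Option ℕ)} {y : ℕ} (hy : y < leastUnseen σ) :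
    y ∈ cntL σ :=
  not_not.mp (Nat.find_min _ hy)

theorem leastUnseen_le_of_not_mem {σ : List (Option ℕ)} {x : ℕ} (hx : x ∉ cntL σ) :
    leastUnseen σ ≤ x :=
  Nat.find_min' _ hx

theorem le_leastUnseen_of_forall_lt {σ : List (Option ℕ)} {x : ℕ} (hx : ∀ y < x, y ∈ cntL σ) :
    x ≤ leastUnseen σ :=
  not_lt.mp fun h => leastUnseen_not_mem σ (hx _ h)

theorem leastUnseen_mono {σ τ : List (Option ℕ)} (h : cntL σ ⊆ cntL τ) :
    leastUnseen σ ≤ leastUnseen τ :=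
  le_leastUnseen_of_forall_lt fun _ hy => h (mem_cntL_of_lt_leastUnseen hy)

theorem leastUnseen_eq_iff {σ : List (Option ℕ)} {x : ℕ} :
    leastUnseen σ = x ↔ x ∉ cntL σ ∧ ∀ y ∈ List.range x, y ∈ cntL σ := by
  simp only [List.mem_range]
  refine ⟨?_, fun ⟨hx, hlt⟩ => (leastUnseen_le_of_not_mem hx).antisymm
    (le_leastUnseen_of_forall_lt hlt)⟩
  rintro rfl
  exact ⟨leastUnseen_not_mem σ, fun _ => mem_cntL_of_lt_leastUnseen⟩

theorem primrec_leastUnseen : Primrec leastUnseen := by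
  have hmem : PrimrecRel fun (σ : List (Option ℕ)) (x : ℕ) => x ∈ cntL σ :=
    (PrimrecRel.exists_mem_list (R := fun (a : Option ℕ) (x : ℕ) => a = some x)
      (Primrec.eq.comp Primrec.fst (Primrec.option_some.comp Primrec.snd))).of_eq
      fun σ x => by simp [cntL]
  refine Primrec.of_graph ⟨List.length, Primrec.list_length, fun σ => ?_⟩ ?_
  · obtain ⟨x, hx, hσ⟩ := exists_le_length_some_not_mem σ
    exact (leastUnseen_le_of_not_mem hσ).trans hx
  · have hmem' : PrimrecRel fun (x : ℕ) (σ : List (Option ℕ)) => x ∈ cntL σ :=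
      hmem.comp Primrec.snd Primrec.fst
    refine (PrimrecPred.and hmem.not ((PrimrecRel.forall_mem_list hmem').comp
      (Primrec.list_range.comp Primrec.snd) Primrec.fst)).of_eq fun _ => leastUnseen_eq_iff.symm

theorem mem_cntL_seg {T : ℕ → Option ℕ} {n x : ℕ} :
    x ∈ cntL (seg T n) ↔ ∃ p < n, T p = some x := by
  simp [cntL, seg]

theorem cntL_seg_mono (T : ℕ → Option ℕ) {n j : ℕ} (h : n ≤ j) :
    cntL (seg T n) ⊆ cntL (seg T j) := fun _ hx =>
  let ⟨p, hp, hT⟩ := mem_cntL_seg.mp hx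
  mem_cntL_seg.mpr ⟨p, hp.trans_le h, hT⟩

theorem cntL_seg_subset_cntT (T : ℕ → Option ℕ) (n : ℕ) : cntL (seg T n) ⊆ cntT T :=
  fun _ hx => let ⟨p, _, hT⟩ := mem_cntL_seg.mp hx; ⟨p, hT⟩

theorem eventually_mem_cntL_seg {T : ℕ → Option ℕ} {x : ℕ} (hx : x ∈ cntT T) :
    ∀ᶠ n in Filter.atTop, x ∈ cntL (seg T n) := by
  obtain ⟨p, hp⟩ := hx
  exact Filter.eventually_atTop.mpr ⟨p + 1, fun n hn => mem_cntL_seg.mpr ⟨p, hn, hp⟩⟩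

theorem eventually_leastUnseen_seg_eq {T : ℕ → Option ℕ} {L : Set ℕ} (hT : IsText T L)
    {c : ℕ} (hc : c ∉ L) (hlt : ∀ y < c, y ∈ L) :
    ∀ᶠ n in Filter.atTop, leastUnseen (seg T n) = c := by
  have hall : ∀ᶠ n in Filter.atTop, ∀ y < c, y ∈ cntL (seg T n) :=
    (Set.finite_Iio c).eventually_all.mpr fun y hy => eventually_mem_cntL_seg (hT ▸ hlt y hy)
  filter_upwards [hall] with n hn
  exact (leastUnseen_le_of_not_mem fun h => hc (hT ▸ cntL_seg_subset_cntT T n h)).antisymm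
    (le_leastUnseen_of_forall_lt hn)

def unseenLearner (g : ℕ → ℕ) : Learner := fun σ => some (g (leastUnseen σ))

theorem computable_unseenLearner {g : ℕ → ℕ} (hg : Computable g) :
    Computable (unseenLearner g) :=
  Computable.option_some.comp (hg.comp primrec_leastUnseen.to_comp)

theorem exLearnsIn_unseenLearner {g : ℕ → ℕ} {C : Set (Set ℕ)}
    (hC : ∀ L ∈ C, ∃ c, c ∉ L ∧ (∀ y < c, y ∈ L) ∧ W (g c) = L) :
    ExLearnsIn W (unseenLearner g) C := by
  intro L hL T hT
  obtain ⟨c, hc, hlt, hW⟩ := hC L hL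
  obtain ⟨N, hN⟩ := Filter.eventually_atTop.mp (eventually_leastUnseen_seg_eq hT hc hlt)
  refine ⟨N, g c, by simp [unseenLearner, hN N le_rfl], hW, fun j hj => ?_⟩
  simp [unseenLearner, hN j hj, hN N le_rfl]

theorem conservative_unseenLearner {g : ℕ → ℕ} (hg : ∀ c, c ∉ W (g c)) :
    Conservative (unseenLearner g) := by
  intro T n k _ e he hne hsub
  set c := leastUnseen (seg T n)
  obtain rfl : g c = e := Option.some.inj he
  have hseen : c ∈ cntL (seg T (n + k)) := by
    by_contra hc
    refine hne (congrArg (some ∘ g) ((leastUnseen_le_of_not_mem hc).antisymm ?_))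
    exact leastUnseen_mono (cntL_seg_mono T (Nat.le_add_right n k))
  exact hg c (hsub hseen)

namespace PosEq

variable (η : PosEq)

def IsLeastRep (x : ℕ) : Prop := ∀ y, η.rel x y → x ≤ y

theorem exists_isLeastRep_rel (x : ℕ) : ∃ r, η.IsLeastRep r ∧ η.rel r x := by
  classical
  have hx : ∃ r, η.rel x r := ⟨x, η.equiv.refl x⟩
  refine ⟨Nat.find hx, fun y hy => Nat.find_min' hx (η.equiv.trans (Nat.find_spec hx) hy),
    η.equiv.symm (Nat.find_spec hx)⟩

theorem setOf_isLeastRep_infinite : {x | η.IsLeastRep x}.Infinite := by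
  refine Set.Infinite.of_image (fun r => {y | η.rel r y}) (η.classes_infinite.mono ?_)
  rintro _ ⟨x, rfl⟩
  obtain ⟨r, hr, hrx⟩ := η.exists_isLeastRep_rel x
  exact ⟨r, hr, Set.ext fun y => ⟨fun h => η.equiv.trans (η.equiv.symm hrx) h,
    fun h => η.equiv.trans hrx h⟩⟩

end PosEq

theorem strictMono_a (η : PosEq) : StrictMono (a η) :=
  Nat.nth_strictMono η.setOf_isLeastRep_infinite

theorem isLeastRep_a (η : PosEq) (n : ℕ) : η.IsLeastRep (a η n) :=
  Nat.nth_mem_of_infinite η.setOf_isLeastRep_infinite n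

theorem a_not_mem_A (η : PosEq) (m : ℕ) : a η m ∉ A η m := fun ⟨_, hj, hrel⟩ =>
  (isLeastRep_a η m _ (η.equiv.symm hrel)).not_gt (strictMono_a η hj)

-- `z` lies in the class of its least representative `r ≤ z`, which is `a j` with `j < m`.
theorem mem_A_of_lt_a {η : PosEq} {m z : ℕ} (hz : z < a η m) : z ∈ A η m := by
  classical
  obtain ⟨r, hr, hrz⟩ := η.exists_isLeastRep_rel z
  have hnth : a η (Nat.count η.IsLeastRep r) = r := Nat.nth_count hr
  refine ⟨_, (strictMono_a η).lt_iff_lt.mp ?_, hnth ▸ hrz⟩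
  rw [hnth]
  exact (hr z hrz).trans_lt hz

theorem A_eq_hypothesis (η : PosEq) (m : ℕ) : A η m = hypothesis η (a η m) := by
  ext x
  constructor
  · intro hx
    obtain ⟨j, hj, hrel⟩ := id hx
    exact ⟨fun h => a_not_mem_A η m (h ▸ hx), a η j, strictMono_a η hj, η.equiv.symm hrel⟩
  · rintro ⟨-, y, hy, hrel⟩
    obtain ⟨j, hj, hrel'⟩ := mem_A_of_lt_a hy
    exact ⟨j, hj, η.equiv.trans hrel' (η.equiv.symm hrel)⟩

theorem stmt18_general (η : PosEq) :
    ∃ M : Learner, Computable M ∧ ExLearnsIn W M (ascendingFamily η) ∧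
      Conservative M := by
  obtain ⟨g, hg, hW⟩ := exists_computable_W_eq_hypothesis η
  refine ⟨unseenLearner g, computable_unseenLearner hg, exLearnsIn_unseenLearner ?_,
    conservative_unseenLearner fun c hc => (hW c ▸ hc).1 rfl⟩
  rintro _ ⟨m, rfl⟩
  exact ⟨a η m, a_not_mem_A η m, fun _ => mem_A_of_lt_a, by rw [hW, A_eq_hypothesis]⟩

/-- For every positive equivalence relation η all of whose
equivalence classes are infinite, the ascending family 𝒜_η is conservatively
explanatorily learnable. -/
theorem stmt18 (η : PosEq) (h : ∀ x : ℕ, (classOf η x).Infinite) :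
    ∃ M : Learner, Computable M ∧ ExLearnsIn W M (ascendingFamily η) ∧
      Conservative M :=
  stmt18_general η

end PEL
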